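/- Along the parametric phase-transition curve, as τ → ∞: δ(τ) → 0, 2·exp(τ²)·δ(τ) → 1, τ²·ρ(τ) → 1, and consequently ρ(τ)·log( 1/(2·δ(τ)) ) → 1; that is, the phase-transition curve satisfies ρ_SE(δ) ∼ 1/log(1/(2δ)) as δ → 0. -/

import Mathlib

/-!
Write `G(τ) = ∫_τ^∞ e^{-ω²} dω`. The integrands of `χ₁` and `χ₂` become exact derivatives
after adding a multiple of `e^{-ω²}`, which gives `χ₁ = -G/2` and `χ₂ = e^{-τ²}/2 - τG`. Hence,
with `u(τ) = 2τ e^{τ²} G(τ)`,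
`2 e^{τ²} δ = (2 - u + u/τ²) / (1 + G/τ)` and `τ² ρ = u / (2 - u + u/τ²)`.
The Gaussian tail bounds `τ e^{-τ²}/(2τ² + 1) ≤ G(τ) ≤ e^{-τ²}/(2τ)` squeeze `u` to `1`, which
gives the two middle limits. The other two follow from `δ = (2 e^{τ²} δ) · e^{-τ²}/2` and
`log (1/(2δ)) = τ² - log (2 e^{τ²} δ)`.
-/

open MeasureTheory Filter

/-- `χ₁(τ) = ∫_τ^∞ ω (τ − ω) e^{−ω²} dω`. -/
noncomputable def chi1 (τ : ℝ) : ℝ :=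
  ∫ ω in Set.Ioi τ, ω * (τ - ω) * Real.exp (-ω ^ 2)

/-- `χ₂(τ) = ∫_τ^∞ ω (ω − τ)² e^{−ω²} dω`. -/
noncomputable def chi2 (τ : ℝ) : ℝ :=
  ∫ ω in Set.Ioi τ, ω * (ω - τ) ^ 2 * Real.exp (-ω ^ 2)

/-- The undersampling ratio `δ(τ)` along the parametric phase-transition curve. -/
noncomputable def deltaPT (τ : ℝ) : ℝ :=
  (4 * (1 + τ ^ 2) * chi1 τ - 4 * τ * chi2 τ) / (4 * chi1 τ - 2 * τ)

/-- The sparsity ratio `ρ(τ)` along the parametric phase-transition curve. -/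
noncomputable def rhoPT (τ : ℝ) : ℝ :=
  chi1 τ / ((1 + τ ^ 2) * chi1 τ - τ * chi2 τ)

open Real Set Topology Polynomial

theorem tendsto_pow_mul_exp_neg_sq_atTop_nhds_zero (n : ℕ) :
    Tendsto (fun x : ℝ => x ^ n * exp (-x ^ 2)) atTop (𝓝 0) := by
  have h := (tendsto_pow_mul_exp_neg_atTop_nhds_zero n).comp (tendsto_pow_atTop two_ne_zero)
  refine squeeze_zero_norm' ?_ h
  filter_upwards [eventually_ge_atTop 1] with x hx
  rw [norm_mul, norm_pow, norm_of_nonneg (by linarith), norm_of_nonneg (exp_pos _).le]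
  change _ ≤ (x ^ 2) ^ n * exp (-x ^ 2)
  gcongr
  nlinarith

theorem integrable_pow_mul_exp_neg_sq (n : ℕ) :
    Integrable fun x : ℝ => x ^ n * exp (-x ^ 2) := by
  simpa using integrable_rpow_mul_exp_neg_mul_sq one_pos
    (neg_one_lt_zero.trans_le (Nat.cast_nonneg n))

namespace Polynomial

theorem tendsto_eval_mul_exp_neg_sq (P : ℝ[X]) :
    Tendsto (fun x : ℝ => P.eval x * exp (-x ^ 2)) atTop (𝓝 0) := by
  induction P using Polynomial.induction_on' with
  | add p q hp hq => simpa [add_mul] using hp.add hq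
  | monomial n c =>
    simpa [mul_assoc] using (tendsto_pow_mul_exp_neg_sq_atTop_nhds_zero n).const_mul c

theorem integrable_eval_mul_exp_neg_sq (P : ℝ[X]) :
    Integrable fun x : ℝ => P.eval x * exp (-x ^ 2) := by
  induction P using Polynomial.induction_on' with
  | add p q hp hq => simpa [add_mul, Pi.add_def] using hp.add hq
  | monomial n c => simpa [mul_assoc] using (integrable_pow_mul_exp_neg_sq n).const_mul c

end Polynomial

theorem hasDerivAt_exp_neg_sq (x : ℝ) :
    HasDerivAt (fun ω => exp (-ω ^ 2)) (-2 * x * exp (-x ^ 2)) x := by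
  simpa [mul_comm] using ((hasDerivAt_pow 2 x).fun_neg).exp

noncomputable def gaussTail (τ : ℝ) : ℝ := ∫ ω in Ioi τ, exp (-ω ^ 2)

theorem integrable_exp_neg_sq : Integrable fun x : ℝ => exp (-x ^ 2) := by
  simpa using integrable_pow_mul_exp_neg_sq 0

theorem gaussTail_nonneg (τ : ℝ) : 0 ≤ gaussTail τ :=
  setIntegral_nonneg measurableSet_Ioi fun _ _ => (exp_pos _).le

theorem integral_Ioi_mul_exp_neg_sq (τ : ℝ) :
    ∫ ω in Ioi τ, ω * exp (-ω ^ 2) = exp (-τ ^ 2) / 2 := by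
  have hderiv (x : ℝ) : HasDerivAt (fun ω => -(exp (-ω ^ 2) / 2)) (x * exp (-x ^ 2)) x := by
    refine ((hasDerivAt_exp_neg_sq x).div_const 2).fun_neg.congr_deriv ?_
    ring
  have htend : Tendsto (fun ω : ℝ => -(exp (-ω ^ 2) / 2)) atTop (𝓝 0) := by
    simpa using ((tendsto_pow_mul_exp_neg_sq_atTop_nhds_zero 0).div_const 2).neg
  rw [integral_Ioi_of_hasDerivAt_of_tendsto' (fun x _ => hderiv x)
    (by simpa using (integrable_pow_mul_exp_neg_sq 1).integrableOn) htend]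
  ring

theorem gaussTail_le {τ : ℝ} (hτ : 0 < τ) : gaussTail τ ≤ exp (-τ ^ 2) / (2 * τ) := by
  calc gaussTail τ ≤ ∫ ω in Ioi τ, τ⁻¹ * (ω * exp (-ω ^ 2)) := by
        refine setIntegral_mono_on integrable_exp_neg_sq.integrableOn
          (by simpa using ((integrable_pow_mul_exp_neg_sq 1).const_mul τ⁻¹).integrableOn)
          measurableSet_Ioi fun x hx => ?_
        rw [← mul_assoc, le_mul_iff_one_le_left (exp_pos _), le_inv_mul_iff₀ hτ, mul_one]
        exact le_of_lt hx
    _ = exp (-τ ^ 2) / (2 * τ) := by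
        rw [integral_const_mul, integral_Ioi_mul_exp_neg_sq]
        field_simp

theorem le_gaussTail (τ : ℝ) : τ / (2 * τ ^ 2 + 1) * exp (-τ ^ 2) ≤ gaussTail τ := by
  have hpos (x : ℝ) : 0 < 2 * x ^ 2 + 1 := by positivity
  have hderiv (x : ℝ) : HasDerivAt (fun ω => -(ω / (2 * ω ^ 2 + 1) * exp (-ω ^ 2)))
      ((1 - 2 / (2 * x ^ 2 + 1) ^ 2) * exp (-x ^ 2)) x := by
    have hq : HasDerivAt (fun ω : ℝ => 2 * ω ^ 2 + 1) (4 * x) x :=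
      (((hasDerivAt_pow 2 x).const_mul 2).add_const 1).congr_deriv (by ring)
    refine (((hasDerivAt_id' x).fun_div hq (hpos x).ne').mul
      (hasDerivAt_exp_neg_sq x)).fun_neg.congr_deriv ?_
    field_simp
    ring
  have hbound (x : ℝ) : |1 - 2 / (2 * x ^ 2 + 1) ^ 2| ≤ 1 := by
    have h : 2 / (2 * x ^ 2 + 1) ^ 2 ≤ 2 :=
      div_le_self zero_le_two (one_le_pow₀ (by nlinarith [sq_nonneg x]))
    rw [abs_le]
    constructor <;> nlinarith [div_nonneg zero_le_two (sq_nonneg (2 * x ^ 2 + 1))]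
  have hint : IntegrableOn (fun x => (1 - 2 / (2 * x ^ 2 + 1) ^ 2) * exp (-x ^ 2)) (Ioi τ) := by
    refine integrable_exp_neg_sq.integrableOn.mono' (by fun_prop) (.of_forall fun x => ?_)
    rw [norm_mul, norm_of_nonneg (exp_pos _).le, norm_eq_abs]
    exact mul_le_of_le_one_left (exp_pos _).le (hbound x)
  have htend : Tendsto (fun ω : ℝ => -(ω / (2 * ω ^ 2 + 1) * exp (-ω ^ 2))) atTop (𝓝 0) := by
    refine squeeze_zero_norm' ?_ (tendsto_pow_mul_exp_neg_sq_atTop_nhds_zero 1)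
    filter_upwards [eventually_ge_atTop 0] with x hx
    rw [norm_neg, norm_mul, norm_of_nonneg (exp_pos _).le, norm_of_nonneg (by positivity), pow_one]
    gcongr
    exact div_le_self hx (by nlinarith [sq_nonneg x])
  calc τ / (2 * τ ^ 2 + 1) * exp (-τ ^ 2)
      = ∫ x in Ioi τ, (1 - 2 / (2 * x ^ 2 + 1) ^ 2) * exp (-x ^ 2) := by
        rw [integral_Ioi_of_hasDerivAt_of_tendsto' (fun x _ => hderiv x) hint htend]
        ring
    _ ≤ gaussTail τ := by
        refine setIntegral_mono_on hint integrable_exp_neg_sq.integrableOn measurableSet_Ioi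
          fun x _ => mul_le_of_le_one_left (exp_pos _).le ?_
        linarith [div_nonneg zero_le_two (sq_nonneg (2 * x ^ 2 + 1))]

theorem chi1_eq_gaussTail (τ : ℝ) : chi1 τ = -(gaussTail τ / 2) := by
  have hderiv (x : ℝ) : HasDerivAt (fun ω => (ω - τ) / 2 * exp (-ω ^ 2))
      ((x * (τ - x) + 1 / 2) * exp (-x ^ 2)) x := by
    refine ((((hasDerivAt_id' x).sub_const τ).div_const 2).mul
      (hasDerivAt_exp_neg_sq x)).congr_deriv ?_
    ring
  have htend : Tendsto (fun ω : ℝ => (ω - τ) / 2 * exp (-ω ^ 2)) atTop (𝓝 0) := by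
    convert (C (1 / 2) * (X - C τ)).tendsto_eval_mul_exp_neg_sq using 3
    simp
    ring
  have hint : IntegrableOn (fun x => (x * (τ - x) + 1 / 2) * exp (-x ^ 2)) (Ioi τ) := by
    convert (X * (C τ - X) + C (1 / 2)).integrable_eval_mul_exp_neg_sq.integrableOn using 3; simp
  have h := integral_Ioi_of_hasDerivAt_of_tendsto' (fun x _ => hderiv x) hint htend
  have hint₁ : IntegrableOn (fun x => x * (τ - x) * exp (-x ^ 2)) (Ioi τ) := by
    convert (X * (C τ - X)).integrable_eval_mul_exp_neg_sq.integrableOn using 3; simp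
  have hint₂ : IntegrableOn (fun x => 1 / 2 * exp (-x ^ 2)) (Ioi τ) := by
    convert (C (1 / 2)).integrable_eval_mul_exp_neg_sq.integrableOn using 3; simp
  simp only [add_mul, sub_self, zero_div, zero_mul] at h
  rw [integral_add hint₁ hint₂, integral_const_mul] at h
  unfold chi1 gaussTail
  linarith

theorem chi2_eq_gaussTail (τ : ℝ) : chi2 τ = exp (-τ ^ 2) / 2 - τ * gaussTail τ := by
  have hderiv (x : ℝ) : HasDerivAt (fun ω => -((ω - τ) ^ 2 + 1) / 2 * exp (-ω ^ 2))
      ((x * (x - τ) ^ 2 + τ) * exp (-x ^ 2)) x := by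
    refine (((((hasDerivAt_id' x).sub_const τ).fun_pow 2).add_const 1).fun_neg.div_const 2 |>.mul
      (hasDerivAt_exp_neg_sq x)).congr_deriv ?_
    ring
  have htend : Tendsto (fun ω : ℝ => -((ω - τ) ^ 2 + 1) / 2 * exp (-ω ^ 2)) atTop (𝓝 0) := by
    convert (C (-1 / 2) * ((X - C τ) ^ 2 + 1)).tendsto_eval_mul_exp_neg_sq using 3
    simp
    ring
  have hint : IntegrableOn (fun x => (x * (x - τ) ^ 2 + τ) * exp (-x ^ 2)) (Ioi τ) := by
    convert (X * (X - C τ) ^ 2 + C τ).integrable_eval_mul_exp_neg_sq.integrableOn using 3; simp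
  have h := integral_Ioi_of_hasDerivAt_of_tendsto' (fun x _ => hderiv x) hint htend
  have hint₁ : IntegrableOn (fun x => x * (x - τ) ^ 2 * exp (-x ^ 2)) (Ioi τ) := by
    convert (X * (X - C τ) ^ 2).integrable_eval_mul_exp_neg_sq.integrableOn using 3; simp
  have hint₂ : IntegrableOn (fun x => τ * exp (-x ^ 2)) (Ioi τ) := by
    convert (C τ).integrable_eval_mul_exp_neg_sq.integrableOn using 3; simp
  simp only [add_mul] at h
  rw [integral_add hint₁ hint₂, integral_const_mul] at h
  unfold chi2 gaussTail
  linarith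

noncomputable def gaussTailRatio (τ : ℝ) : ℝ := 2 * τ * exp (τ ^ 2) * gaussTail τ

theorem gaussTailRatio_nonneg {τ : ℝ} (hτ : 0 ≤ τ) : 0 ≤ gaussTailRatio τ := by
  have := gaussTail_nonneg τ
  unfold gaussTailRatio
  positivity

theorem gaussTailRatio_le_one {τ : ℝ} (hτ : 0 < τ) : gaussTailRatio τ ≤ 1 := by
  calc gaussTailRatio τ ≤ 2 * τ * exp (τ ^ 2) * (exp (-τ ^ 2) / (2 * τ)) := by
        unfold gaussTailRatio; gcongr; exact gaussTail_le hτ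
    _ = 1 := by rw [exp_neg]; field_simp

theorem le_gaussTailRatio {τ : ℝ} (hτ : 0 ≤ τ) :
    2 * τ ^ 2 / (2 * τ ^ 2 + 1) ≤ gaussTailRatio τ := by
  calc 2 * τ ^ 2 / (2 * τ ^ 2 + 1)
      = 2 * τ * exp (τ ^ 2) * (τ / (2 * τ ^ 2 + 1) * exp (-τ ^ 2)) := by
        rw [exp_neg]; field_simp
    _ ≤ gaussTailRatio τ := by unfold gaussTailRatio; gcongr; exact le_gaussTail τ

theorem tendsto_gaussTailRatio_atTop : Tendsto gaussTailRatio atTop (𝓝 1) := by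
  have hlow : Tendsto (fun τ : ℝ => 2 * τ ^ 2 / (2 * τ ^ 2 + 1)) atTop (𝓝 1) := by
    have h : Tendsto (fun τ : ℝ => 2 * τ ^ 2 + 1) atTop atTop :=
      tendsto_atTop_add_const_right _ 1
        ((tendsto_pow_atTop two_ne_zero).const_mul_atTop two_pos)
    convert (tendsto_const_nhds (x := (1 : ℝ))).sub h.inv_tendsto_atTop using 2 with τ
    · simp only [Pi.inv_apply]; field_simp; ring
    · simp
  exact tendsto_of_tendsto_of_tendsto_of_le_of_le' hlow tendsto_const_nhds
    (eventually_ge_atTop 0 |>.mono fun τ hτ => le_gaussTailRatio hτ)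
    (eventually_gt_atTop 0 |>.mono fun τ hτ => gaussTailRatio_le_one hτ)

theorem two_mul_exp_sq_mul_deltaPT {τ : ℝ} (hτ : 0 < τ) :
    2 * exp (τ ^ 2) * deltaPT τ =
      (2 - gaussTailRatio τ + gaussTailRatio τ / τ ^ 2) /
        (1 + gaussTailRatio τ * exp (-τ ^ 2) / (2 * τ ^ 2)) := by
  have hG := gaussTail_nonneg τ
  have hden : 4 * -(gaussTail τ / 2) - 2 * τ ≠ 0 := by linarith
  unfold deltaPT gaussTailRatio
  rw [chi1_eq_gaussTail, chi2_eq_gaussTail, exp_neg, mul_div_assoc',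
    div_eq_div_iff hden (by positivity)]
  field_simp
  ring

theorem sq_mul_rhoPT {τ : ℝ} (hτ : 0 < τ) :
    τ ^ 2 * rhoPT τ =
      gaussTailRatio τ / (2 - gaussTailRatio τ + gaussTailRatio τ / τ ^ 2) := by
  have hD : 0 < 2 - gaussTailRatio τ + gaussTailRatio τ / τ ^ 2 := by
    linarith [gaussTailRatio_le_one hτ, div_nonneg (gaussTailRatio_nonneg hτ.le) (sq_nonneg τ)]
  have hN : (1 + τ ^ 2) * chi1 τ - τ * chi2 τ =
      -(τ * exp (-τ ^ 2) * (2 - gaussTailRatio τ + gaussTailRatio τ / τ ^ 2) / 4) := by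
    unfold gaussTailRatio
    rw [chi1_eq_gaussTail, chi2_eq_gaussTail, exp_neg]
    field_simp
    ring
  unfold rhoPT
  rw [hN, chi1_eq_gaussTail]
  unfold gaussTailRatio at hD ⊢
  rw [exp_neg]
  field_simp
  ring

theorem tendsto_inv_sq_atTop_zero : Tendsto (fun τ : ℝ => (τ ^ 2)⁻¹) atTop (𝓝 0) :=
  (tendsto_pow_atTop two_ne_zero).inv_tendsto_atTop

theorem tendsto_two_mul_exp_sq_mul_deltaPT :
    Tendsto (fun τ => 2 * exp (τ ^ 2) * deltaPT τ) atTop (𝓝 1) := by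
  have hu := tendsto_gaussTailRatio_atTop
  have h := ((tendsto_const_nhds (x := (2 : ℝ))).sub hu |>.add
    (hu.mul tendsto_inv_sq_atTop_zero)).div
    ((tendsto_const_nhds (x := (1 : ℝ))).add
      ((hu.mul (tendsto_pow_mul_exp_neg_sq_atTop_nhds_zero 0)).mul
        tendsto_inv_sq_atTop_zero |>.div_const 2)) (by norm_num)
  norm_num at h
  refine h.congr' ?_
  filter_upwards [eventually_gt_atTop 0] with τ hτ
  rw [two_mul_exp_sq_mul_deltaPT hτ, Pi.div_apply]
  field_simp

theorem tendsto_sq_mul_rhoPT : Tendsto (fun τ => τ ^ 2 * rhoPT τ) atTop (𝓝 1) := by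
  have hu := tendsto_gaussTailRatio_atTop
  have h := hu.div ((tendsto_const_nhds (x := (2 : ℝ))).sub hu |>.add
    (hu.mul tendsto_inv_sq_atTop_zero)) (by norm_num)
  norm_num at h
  refine h.congr' ?_
  filter_upwards [eventually_gt_atTop 0] with τ hτ
  rw [sq_mul_rhoPT hτ, Pi.div_apply]
  field_simp

theorem tendsto_zero_of_tendsto_two_mul_exp_sq_mul {δ : ℝ → ℝ}
    (hδ : Tendsto (fun τ => 2 * exp (τ ^ 2) * δ τ) atTop (𝓝 1)) :
    Tendsto δ atTop (𝓝 0) := by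
  have h := hδ.mul ((tendsto_pow_mul_exp_neg_sq_atTop_nhds_zero 0).div_const 2)
  norm_num at h
  refine h.congr fun τ => ?_
  rw [exp_neg]
  field_simp

theorem tendsto_mul_log_one_div_two_mul {δ ρ : ℝ → ℝ}
    (hδ : Tendsto (fun τ => 2 * exp (τ ^ 2) * δ τ) atTop (𝓝 1))
    (hρ : Tendsto (fun τ => τ ^ 2 * ρ τ) atTop (𝓝 1)) :
    Tendsto (fun τ => ρ τ * log (1 / (2 * δ τ))) atTop (𝓝 1) := by
  have hlog : Tendsto (fun τ => log (2 * exp (τ ^ 2) * δ τ)) atTop (𝓝 0) := by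
    simpa [Function.comp_def] using (continuousAt_log one_ne_zero).tendsto.comp hδ
  have h := hρ.mul ((tendsto_const_nhds (x := (1 : ℝ))).sub (hlog.mul tendsto_inv_sq_atTop_zero))
  norm_num at h
  refine h.congr' ?_
  filter_upwards [eventually_gt_atTop 0, hδ.eventually (eventually_gt_nhds one_pos)]
    with τ hτ hδτ
  have hδpos : 0 < δ τ := pos_of_mul_pos_right hδτ (by positivity)
  have hlog_eq : log (1 / (2 * δ τ)) = τ ^ 2 - log (2 * exp (τ ^ 2) * δ τ) := by
    rw [mul_right_comm, log_mul (by positivity) (exp_pos _).ne', log_exp, one_div, log_inv]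
    ring
  rw [hlog_eq]
  field_simp

/-- Along the parametric phase-transition curve, as `τ → ∞`: `δ(τ) → 0`,
`2 e^{τ²} δ(τ) → 1`, `τ² ρ(τ) → 1`, and consequently `ρ(τ)·log(1/(2δ(τ))) → 1`;
i.e. the phase-transition curve satisfies `ρ_SE(δ) ∼ 1/log(1/(2δ))` as `δ → 0`. -/
theorem phase_transition_asymptotics :
    Tendsto (fun τ : ℝ => deltaPT τ) atTop (nhds 0) ∧
    Tendsto (fun τ : ℝ => 2 * Real.exp (τ ^ 2) * deltaPT τ) atTop (nhds 1) ∧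
    Tendsto (fun τ : ℝ => τ ^ 2 * rhoPT τ) atTop (nhds 1) ∧
    Tendsto (fun τ : ℝ => rhoPT τ * Real.log (1 / (2 * deltaPT τ))) atTop (nhds 1) :=
  ⟨tendsto_zero_of_tendsto_two_mul_exp_sq_mul tendsto_two_mul_exp_sq_mul_deltaPT,
    tendsto_two_mul_exp_sq_mul_deltaPT, tendsto_sq_mul_rhoPT,
    tendsto_mul_log_one_div_two_mul tendsto_two_mul_exp_sq_mul_deltaPT tendsto_sq_mul_rhoPT⟩
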